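/- arXiv:2212.03362 — 2 statements merged into one kernel-verified Lean document; each statement's English description precedes it below -/
import Mathlib

section
/- The total variation distance between a Poisson distribution with mean θ and a Binomial distribution with parameters r and p satisfies d_TV(Poi(θ), Bin(r,p)) ≤ θ²/r + |rp − θ|. -/
/-- Poisson probability mass function with mean `θ`, on the nonnegative integers. -/
noncomputable def poissonPMF (θ : ℝ) (k : ℕ) : ℝ :=
  Real.exp (-θ) * θ ^ k / (Nat.factorial k)

/-- Binomial probability mass function with `r` trials and success probability `p`. -/
noncomputable def binomialPMF (r : ℕ) (p : ℝ) (k : ℕ) : ℝ :=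
  (r.choose k : ℝ) * p ^ k * (1 - p) ^ (r - k)

/-- Total variation distance between two (sub)probability mass functions on `ℕ`. -/
noncomputable def tvDist (f g : ℕ → ℝ) : ℝ :=
  (1 / 2) * ∑' k : ℕ, |f k - g k|

/-!
Poi(nq) and Bin(n, q) are the `n`-fold convolution powers of Poi(q) and Bin(1, q), and total
variation distance is subadditive under convolution. Hence
d_TV(Poi(nq), Bin(n, q)) ≤ n · d_TV(Poi(q), Bin(1, q)) = nq(1 - e^{-q}) ≤ nq² (Le Cam), and
likewise d_TV(Bin(n, q), Bin(n, p)) ≤ n · d_TV(Bin(1, q), Bin(1, p)) = n|q - p|. For θ ≤ r take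
q = θ/r and use the triangle inequality; for θ > r the right-hand side exceeds 1 ≥ d_TV.
-/

open Finset

structure IsPMF (f : ℕ → ℝ) : Prop where
  nonneg : ∀ k, 0 ≤ f k
  hasSum : HasSum f 1

namespace IsPMF

variable {f : ℕ → ℝ}

lemma summable (hf : IsPMF f) : Summable f := hf.hasSum.summable

lemma tsum_abs (hf : IsPMF f) : ∑' k, |f k| = 1 := by
  simp_rw [abs_of_nonneg (hf.nonneg _)]
  exact hf.hasSum.tsum_eq

end IsPMF

lemma isPMF_single_zero : IsPMF (Pi.single 0 1) :=
  ⟨fun k => by rcases eq_or_ne k 0 with rfl | hk <;> simp [*], hasSum_pi_single 0 1⟩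

lemma tsum_abs_add_le {a b : ℕ → ℝ} (ha : Summable a) (hb : Summable b) :
    ∑' k, |a k + b k| ≤ ∑' k, |a k| + ∑' k, |b k| := by
  rw [← ha.abs.tsum_add hb.abs]
  exact (ha.add hb).abs.tsum_le_tsum (fun k => abs_add_le _ _) (ha.abs.add hb.abs)

lemma tvDist_triangle {f g h : ℕ → ℝ} (hf : Summable f) (hg : Summable g) (hh : Summable h) :
    tvDist f h ≤ tvDist f g + tvDist g h := by
  have key := tsum_abs_add_le (hf.sub hg) (hg.sub hh)
  simp only [sub_add_sub_cancel] at key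
  unfold tvDist
  linarith

lemma tvDist_le_one {f g : ℕ → ℝ} (hf : IsPMF f) (hg : IsPMF g) : tvDist f g ≤ 1 := by
  have key := tsum_abs_add_le hf.summable hg.summable.neg
  simp only [← sub_eq_add_neg, abs_neg, hf.tsum_abs, hg.tsum_abs] at key
  unfold tvDist
  linarith

noncomputable def convSeq (f g : ℕ → ℝ) (n : ℕ) : ℝ :=
  ∑ k ∈ range (n + 1), f k * g (n - k)

section convSeq

variable {u v : ℕ → ℝ}

lemma hasSum_convSeq (hu : Summable u) (hv : Summable v) :
    HasSum (convSeq u v) ((∑' k, u k) * ∑' k, v k) :=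
  hasSum_sum_range_mul_of_summable_norm hu.abs hv.abs

lemma abs_convSeq_le (u v : ℕ → ℝ) (n : ℕ) :
    |convSeq u v n| ≤ convSeq (fun k => |u k|) (fun k => |v k|) n :=
  (abs_sum_le_sum_abs _ _).trans_eq (by simp only [abs_mul]; rfl)

lemma tsum_abs_convSeq_le (hu : Summable u) (hv : Summable v) :
    ∑' n, |convSeq u v n| ≤ (∑' k, |u k|) * ∑' k, |v k| :=
  ((hasSum_convSeq hu hv).summable.abs.tsum_le_tsum (abs_convSeq_le u v)
    (hasSum_convSeq hu.abs hv.abs).summable).trans_eq (hasSum_convSeq hu.abs hv.abs).tsum_eq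

lemma convSeq_sub_convSeq (u u' v v' : ℕ → ℝ) (n : ℕ) :
    convSeq u v n - convSeq u' v' n = convSeq (u - u') v n + convSeq u' (v - v') n := by
  simp only [convSeq, Pi.sub_apply, ← sum_sub_distrib, ← sum_add_distrib]
  exact sum_congr rfl fun _ _ => by ring

lemma IsPMF.convSeq (hu : IsPMF u) (hv : IsPMF v) : IsPMF (convSeq u v) := by
  refine ⟨fun n => sum_nonneg fun k _ => mul_nonneg (hu.nonneg k) (hv.nonneg _), ?_⟩
  simpa [hu.hasSum.tsum_eq, hv.hasSum.tsum_eq] using hasSum_convSeq hu.summable hv.summable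

end convSeq

lemma tvDist_convSeq_le {F G H H' : ℕ → ℝ} (hF : Summable F) (hG : IsPMF G) (hH : IsPMF H)
    (hH' : Summable H') :
    tvDist (convSeq F H) (convSeq G H') ≤ tvDist F G + tvDist H H' := by
  have hFG : Summable (F - G) := hF.sub hG.summable
  have hHH' : Summable (H - H') := hH.summable.sub hH'
  have key := tsum_abs_add_le (hasSum_convSeq hFG hH.summable).summable
    (hasSum_convSeq hG.summable hHH').summable
  simp only [← convSeq_sub_convSeq] at key
  have h₁ := tsum_abs_convSeq_le hFG hH.summable
  have h₂ := tsum_abs_convSeq_le hG.summable hHH'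
  simp only [Pi.sub_apply, hH.tsum_abs, hG.tsum_abs, mul_one, one_mul] at h₁ h₂
  unfold tvDist
  linarith

noncomputable def convPow (f : ℕ → ℝ) : ℕ → ℕ → ℝ
  | 0 => Pi.single 0 1
  | n + 1 => convSeq f (convPow f n)

lemma IsPMF.convPow {f : ℕ → ℝ} (hf : IsPMF f) : ∀ n, IsPMF (convPow f n)
  | 0 => isPMF_single_zero
  | n + 1 => hf.convSeq (hf.convPow n)

lemma tvDist_convPow_le {f g : ℕ → ℝ} (hf : IsPMF f) (hg : IsPMF g) (n : ℕ) :
    tvDist (convPow f n) (convPow g n) ≤ n * tvDist f g := by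
  induction n with
  | zero => simp [convPow, tvDist]
  | succ n ih =>
    calc tvDist (convPow f (n + 1)) (convPow g (n + 1))
        ≤ tvDist f g + tvDist (convPow f n) (convPow g n) :=
          tvDist_convSeq_le hf.summable hg (hf.convPow n) (hg.convPow n).summable
      _ ≤ (n + 1 : ℕ) * tvDist f g := by push_cast; linarith

lemma isPMF_poissonPMF {θ : ℝ} (hθ : 0 ≤ θ) : IsPMF (poissonPMF θ) :=
  ⟨fun k => by unfold poissonPMF; positivity, ProbabilityTheory.hasSum_one_poissonMeasure ⟨θ, hθ⟩⟩

lemma poissonPMF_zero : poissonPMF 0 = Pi.single 0 1 := by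
  ext k
  rcases eq_or_ne k 0 with rfl | hk <;> simp [poissonPMF, *]

lemma poissonPMF_add (a b : ℝ) :
    poissonPMF (a + b) = convSeq (poissonPMF a) (poissonPMF b) := by
  ext n
  rw [convSeq, poissonPMF, add_pow, neg_add, Real.exp_add, mul_div_assoc, sum_div, mul_sum]
  refine sum_congr rfl fun k hk => ?_
  have hkn : k ≤ n := Nat.lt_succ_iff.mp (mem_range.mp hk)
  have hchoose : (n.choose k : ℝ) * k.factorial * (n - k).factorial = n.factorial := by
    exact_mod_cast Nat.choose_mul_factorial_mul_factorial hkn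
  simp only [poissonPMF]
  field_simp
  linear_combination a ^ k * b ^ (n - k) * hchoose

lemma poissonPMF_nat_mul (q : ℝ) (n : ℕ) : poissonPMF (n * q) = convPow (poissonPMF q) n := by
  induction n with
  | zero => simp [convPow, poissonPMF_zero]
  | succ n ih => rw [convPow, ← ih, ← poissonPMF_add]; push_cast; ring_nf

lemma binomialPMF_eq_zero_of_lt {p : ℝ} {n k : ℕ} (h : n < k) : binomialPMF n p k = 0 := by
  simp [binomialPMF, Nat.choose_eq_zero_of_lt h]

lemma hasSum_binomialPMF (p : ℝ) (n : ℕ) : HasSum (binomialPMF n p) 1 := by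
  have hsum : ∑ k ∈ range (n + 1), binomialPMF n p k = 1 := by
    have := add_pow p (1 - p) n
    rw [add_sub_cancel, one_pow] at this
    rw [this]
    exact sum_congr rfl fun k _ => by simp only [binomialPMF]; ring
  exact hsum ▸ hasSum_sum_of_ne_finset_zero fun k hk =>
    binomialPMF_eq_zero_of_lt (by simpa [Nat.lt_succ_iff] using hk)

lemma isPMF_binomialPMF {p : ℝ} (hp0 : 0 ≤ p) (hp1 : p ≤ 1) (n : ℕ) : IsPMF (binomialPMF n p) :=
  ⟨fun k => by have := sub_nonneg.2 hp1; unfold binomialPMF; positivity, hasSum_binomialPMF p n⟩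

lemma binomialPMF_zero (p : ℝ) : binomialPMF 0 p = Pi.single 0 1 := by
  ext k
  rcases eq_or_ne k 0 with rfl | hk
  · simp [binomialPMF]
  · simp [binomialPMF, Nat.choose_eq_zero_of_lt (Nat.pos_of_ne_zero hk), hk]

@[simp] lemma binomialPMF_one_zero (p : ℝ) : binomialPMF 1 p 0 = 1 - p := by simp [binomialPMF]

@[simp] lemma binomialPMF_one_one (p : ℝ) : binomialPMF 1 p 1 = p := by simp [binomialPMF]

@[simp] lemma binomialPMF_one_add_two (p : ℝ) (k : ℕ) : binomialPMF 1 p (k + 2) = 0 :=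
  binomialPMF_eq_zero_of_lt (by omega)

lemma binomialPMF_succ (p : ℝ) (n : ℕ) :
    binomialPMF (n + 1) p = convSeq (binomialPMF 1 p) (binomialPMF n p) := by
  ext k
  cases k with
  | zero => simp [convSeq, binomialPMF, pow_succ']
  | succ k =>
    have hconv : convSeq (binomialPMF 1 p) (binomialPMF n p) (k + 1)
        = p * binomialPMF n p k + (1 - p) * binomialPMF n p (k + 1) := by
      simp [convSeq, sum_range_succ']
    rw [hconv]
    simp only [binomialPMF, Nat.choose_succ_succ, Nat.cast_add, Nat.add_sub_add_right]
    rcases lt_or_ge k n with hk | hk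
    · rw [show n - k = n - (k + 1) + 1 by omega]
      ring
    · rw [Nat.choose_eq_zero_of_lt (show n < k + 1 by omega)]
      ring

lemma binomialPMF_eq_convPow (p : ℝ) (n : ℕ) : binomialPMF n p = convPow (binomialPMF 1 p) n := by
  induction n with
  | zero => rw [binomialPMF_zero, convPow]
  | succ n ih => rw [binomialPMF_succ, convPow, ih]

lemma tvDist_binomialPMF_one (p q : ℝ) : tvDist (binomialPMF 1 p) (binomialPMF 1 q) = |p - q| := by
  have hsupp : ∀ k ∉ range 2, |binomialPMF 1 p k - binomialPMF 1 q k| = 0 := fun k hk => by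
    obtain ⟨k, rfl⟩ : ∃ j, k = j + 2 := ⟨k - 2, by simp only [mem_range, not_lt] at hk; omega⟩
    simp
  rw [tvDist, tsum_eq_sum hsupp]
  simp only [one_div, sum_range_succ, range_one, sum_singleton, binomialPMF_one_zero,
    binomialPMF_one_one, sub_sub_sub_cancel_left, abs_sub_comm q p]
  ring

lemma tvDist_poissonPMF_binomialPMF_one_le {q : ℝ} (hq : 0 ≤ q) :
    tvDist (poissonPMF q) (binomialPMF 1 q) ≤ q ^ 2 := by
  -- Past `k = 1` only the Poisson tail `1 - e^{-q} - q e^{-q}` remains; the total is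
  -- `2q(1 - e^{-q})`, and `1 - e^{-q} ≤ q`.
  have hP := isPMF_poissonPMF hq
  have hsplit := ((hP.summable.sub (hasSum_binomialPMF q 1).summable).abs).sum_add_tsum_nat_add 2
  have hPsplit := hP.summable.sum_add_tsum_nat_add 2
  rw [hP.hasSum.tsum_eq] at hPsplit
  simp only [binomialPMF_one_add_two, sub_zero, abs_of_nonneg (hP.nonneg _)] at hsplit
  simp only [sum_range_succ, sum_range_zero, zero_add, binomialPMF_one_zero,
    binomialPMF_one_one] at hsplit hPsplit
  have hP0 : poissonPMF q 0 = Real.exp (-q) := by simp [poissonPMF]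
  have hP1 : poissonPMF q 1 = Real.exp (-q) * q := by simp [poissonPMF]
  have he : 1 - q ≤ Real.exp (-q) := by linarith [Real.add_one_le_exp (-q)]
  have he1 : Real.exp (-q) ≤ 1 := Real.exp_le_one_iff.2 (by linarith)
  rw [hP0, hP1] at hsplit hPsplit
  rw [tvDist, ← hsplit, abs_of_nonneg (by linarith), abs_of_nonpos (by nlinarith)]
  nlinarith

lemma tvDist_poissonPMF_binomialPMF_le {q : ℝ} (hq0 : 0 ≤ q) (hq1 : q ≤ 1) (n : ℕ) :
    tvDist (poissonPMF (n * q)) (binomialPMF n q) ≤ n * q ^ 2 := by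
  rw [poissonPMF_nat_mul, binomialPMF_eq_convPow]
  calc _ ≤ n * tvDist (poissonPMF q) (binomialPMF 1 q) :=
        tvDist_convPow_le (isPMF_poissonPMF hq0) (isPMF_binomialPMF hq0 hq1 1) n
    _ ≤ n * q ^ 2 := by gcongr; exact tvDist_poissonPMF_binomialPMF_one_le hq0

lemma tvDist_binomialPMF_le {p q : ℝ} (hp0 : 0 ≤ p) (hp1 : p ≤ 1) (hq0 : 0 ≤ q) (hq1 : q ≤ 1)
    (n : ℕ) : tvDist (binomialPMF n p) (binomialPMF n q) ≤ n * |p - q| := by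
  rw [binomialPMF_eq_convPow p, binomialPMF_eq_convPow q, ← tvDist_binomialPMF_one]
  exact tvDist_convPow_le (isPMF_binomialPMF hp0 hp1 1) (isPMF_binomialPMF hq0 hq1 1) n

/-- `d_TV(Poi(θ), Bin(r,p)) ≤ θ²/r + |rp − θ|`. -/
theorem tv_poisson_binomial (θ : ℝ) (hθ : 0 ≤ θ) (r : ℕ) (hr : 0 < r)
    (p : ℝ) (hp0 : 0 ≤ p) (hp1 : p ≤ 1) :
    tvDist (poissonPMF θ) (binomialPMF r p) ≤ θ ^ 2 / r + |r * p - θ| := by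
  have hr' : (0 : ℝ) < r := Nat.cast_pos.2 hr
  by_cases hθr : θ ≤ r
  · set q := θ / r
    have hq0 : 0 ≤ q := by positivity
    have hq1 : q ≤ 1 := (div_le_one hr').2 hθr
    have hrq : r * q = θ := mul_div_cancel₀ θ hr'.ne'
    calc tvDist (poissonPMF θ) (binomialPMF r p)
        ≤ tvDist (poissonPMF θ) (binomialPMF r q) + tvDist (binomialPMF r q) (binomialPMF r p) :=
          tvDist_triangle (isPMF_poissonPMF hθ).summable (hasSum_binomialPMF q r).summable
            (hasSum_binomialPMF p r).summable
      _ ≤ r * q ^ 2 + r * |q - p| := by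
          gcongr
          · exact hrq ▸ tvDist_poissonPMF_binomialPMF_le hq0 hq1 r
          · exact tvDist_binomialPMF_le hq0 hq1 hp0 hp1 r
      _ = θ ^ 2 / r + |r * p - θ| := by
          rw [← hrq, ← mul_sub, abs_mul, abs_of_pos hr', abs_sub_comm]
          field_simp
  · have hθ2 : 1 ≤ θ ^ 2 / r := by
      rw [le_div_iff₀ hr']
      nlinarith [(Nat.one_le_cast (α := ℝ)).2 hr]
    calc tvDist (poissonPMF θ) (binomialPMF r p) ≤ 1 :=
          tvDist_le_one (isPMF_poissonPMF hθ) (isPMF_binomialPMF hp0 hp1 r)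
      _ ≤ θ ^ 2 / r + |r * p - θ| := le_add_of_le_of_nonneg hθ2 (abs_nonneg _)
end

section
/- Let (x_n) and (u_n) be sequences of nonnegative and real numbers respectively, and suppose there are constants C > 0, ρ ∈ (0,1) with u_{n+1} ≤ ρ·|u_n| + C·x_n², and x_{n+1} ≥ θ·x_n for some θ > 0 with ρ < θ², and x_n > 0 for all n. Then there exists a constant C' > 0 and N such that |u_n| ≤ C'·x_n² for all n ≥ N. -/
/-!
The bound propagates by induction: if `|u_n| ≤ M x_n²` with `C ≤ (θ² - ρ) M`, then
`|u_{n+1}| ≤ (ρ M + C) x_n² ≤ θ² M x_n² ≤ M x_{n+1}²`. Taking `M` large enough for this and for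
`n = 0` gives the claim with `N = 0`.
-/

theorem le_mul_of_le_mul_add_of_mul_le {a y : ℕ → ℝ} {ρ C q M : ℝ} (hρ : 0 ≤ ρ) (hM : 0 ≤ M)
    (hMC : C ≤ (q - ρ) * M) (ha : ∀ n, a (n + 1) ≤ ρ * a n + C * y n)
    (hy : ∀ n, q * y n ≤ y (n + 1)) (hy_nonneg : ∀ n, 0 ≤ y n) (h0 : a 0 ≤ M * y 0) :
    ∀ n, a n ≤ M * y n
  | 0 => h0
  | n + 1 => by
    have ih := le_mul_of_le_mul_add_of_mul_le hρ hM hMC ha hy hy_nonneg h0 n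
    calc a (n + 1) ≤ ρ * a n + C * y n := ha n
      _ ≤ ρ * (M * y n) + (q - ρ) * M * y n := by
        gcongr
        · exact hy_nonneg n
      _ = M * (q * y n) := by ring
      _ ≤ M * y (n + 1) := by gcongr; exact hy n

theorem iteration_lemma_general (x : ℕ → ℝ) (u : ℕ → ℝ)
    (hx_pos : ∀ n, 0 < x n)
    (C : ℝ) (hC : 0 < C) (ρ : ℝ) (hρ0 : 0 < ρ)
    (θ : ℝ) (hθ : 0 < θ) (hρθ : ρ < θ ^ 2)
    (hu : ∀ n, |u (n + 1)| ≤ ρ * |u n| + C * (x n) ^ 2)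
    (hxrec : ∀ n, x (n + 1) ≥ θ * x n) :
    ∃ C' > 0, ∃ N : ℕ, ∀ n ≥ N, |u n| ≤ C' * (x n) ^ 2 := by
  have hgap : 0 < θ ^ 2 - ρ := sub_pos.mpr hρθ
  set M := max (|u 0| / x 0 ^ 2) (C / (θ ^ 2 - ρ))
  have hM : 0 < M := (div_pos hC hgap).trans_le (le_max_right _ _)
  have hMC : C ≤ (θ ^ 2 - ρ) * M := by
    rw [mul_comm, ← div_le_iff₀ hgap]; exact le_max_right _ _
  have h0 : |u 0| ≤ M * x 0 ^ 2 := by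
    rw [← div_le_iff₀ (pow_pos (hx_pos 0) 2)]; exact le_max_left _ _
  have hx_sq : ∀ n, θ ^ 2 * x n ^ 2 ≤ x (n + 1) ^ 2 := fun n => by
    rw [← mul_pow]; exact pow_le_pow_left₀ (mul_pos hθ (hx_pos n)).le (hxrec n) 2
  exact ⟨M, hM, 0, fun n _ => le_mul_of_le_mul_add_of_mul_le (a := fun n => |u n|) hρ0.le hM.le
    hMC hu hx_sq (fun n => sq_nonneg (x n)) h0 n⟩

/-- Iteration lemma: if `|u_{n+1}| ≤ ρ|u_n| + C x_n²`, `x_{n+1} ≥ θ x_n > 0` and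
`ρ < θ²`, then `|u_n| ≤ C' x_n²` eventually. -/
theorem iteration_lemma (x : ℕ → ℝ) (u : ℕ → ℝ)
    (hx_nonneg : ∀ n, 0 ≤ x n) (hx_pos : ∀ n, 0 < x n)
    (C : ℝ) (hC : 0 < C) (ρ : ℝ) (hρ0 : 0 < ρ) (hρ1 : ρ < 1)
    (θ : ℝ) (hθ : 0 < θ) (hρθ : ρ < θ ^ 2)
    (hu : ∀ n, |u (n + 1)| ≤ ρ * |u n| + C * (x n) ^ 2)
    (hxrec : ∀ n, x (n + 1) ≥ θ * x n) :
    ∃ C' > 0, ∃ N : ℕ, ∀ n ≥ N, |u n| ≤ C' * (x n) ^ 2 :=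
  iteration_lemma_general x u hx_pos C hC ρ hρ0 θ hθ hρθ hu hxrec
end
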